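/- For every integer n > 3 there exists a set S of n points in the plane in general position with exactly 3 convex-hull vertices such that every biplane graph (S,E) on S has |E| ≤ 4n − 10. -/

import Mathlib

/-- Points in the plane. -/
abbrev Pt := ℝ × ℝ

/-- `S` is in general position: no three distinct points of `S` are collinear. -/
def GenPos (S : Finset Pt) : Prop :=
  ∀ p ∈ S, ∀ q ∈ S, ∀ r ∈ S, p ≠ q → p ≠ r → q ≠ r →
    ¬ Collinear ℝ ({p, q, r} : Set Pt)

/-- The relatively open segment corresponding to an unordered pair of points. -/
def segOf (e : Sym2 Pt) : Set Pt :=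
  Sym2.lift ⟨fun a b => openSegment ℝ a b, fun a b => openSegment_symm ℝ a b⟩ e

/-- `E` is a set of edges on the vertex set `S`: every edge is an unordered pair of
two distinct points of `S`. -/
def IsEdgeSet (S : Finset Pt) (E : Finset (Sym2 Pt)) : Prop :=
  ∀ e ∈ E, ¬ e.IsDiag ∧ ∀ p ∈ e, p ∈ S

/-- A set of edges forms a plane graph: no two distinct edges cross, i.e. their
relatively open segments are disjoint. -/
def PlaneEdges (E : Finset (Sym2 Pt)) : Prop :=
  ∀ e ∈ E, ∀ f ∈ E, e ≠ f → segOf e ∩ segOf f = ∅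

/-- A set of edges forms a biplane graph: it can be partitioned into two plane layers. -/
def BiplaneEdges (E : Finset (Sym2 Pt)) : Prop :=
  ∃ E₁ E₂ : Finset (Sym2 Pt), E = E₁ ∪ E₂ ∧ Disjoint E₁ E₂ ∧
    PlaneEdges E₁ ∧ PlaneEdges E₂

/-- `(S, E)` is a maximal plane graph (triangulation) on `S`. -/
def MaxPlane (S : Finset Pt) (E : Finset (Sym2 Pt)) : Prop :=
  IsEdgeSet S E ∧ PlaneEdges E ∧
  ∀ e : Sym2 Pt, ¬ e.IsDiag → (∀ p ∈ e, p ∈ S) → e ∉ E → ¬ PlaneEdges (insert e E)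

/-- `(S, E)` is a maximal biplane graph on `S`. -/
def MaxBiplane (S : Finset Pt) (E : Finset (Sym2 Pt)) : Prop :=
  IsEdgeSet S E ∧ BiplaneEdges E ∧
  ∀ e : Sym2 Pt, ¬ e.IsDiag → (∀ p ∈ e, p ∈ S) → e ∉ E → ¬ BiplaneEdges (insert e E)

/-- `p` is a vertex of the convex hull of `S`. -/
def HullVertex (S : Finset Pt) (p : Pt) : Prop :=
  p ∈ S ∧ p ∉ convexHull ℝ ((S : Set Pt) \ {p})

/-- The number of convex-hull vertices of `S`. -/
noncomputable def hullCard (S : Finset Pt) : ℕ :=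
  {p : Pt | HullVertex S p}.ncard

/-- The triangle `a b c` is a face of the plane graph `(S,E)`: the three sides are
edges and the open interior of the triangle contains no point of `S`. -/
def IsFace (S : Finset Pt) (E : Finset (Sym2 Pt)) (a b c : Pt) : Prop :=
  s(a, b) ∈ E ∧ s(a, c) ∈ E ∧ s(b, c) ∈ E ∧
  ∀ p ∈ S, p ∉ interior (convexHull ℝ ({a, b, c} : Set Pt))

/-- The edge `e` is flippable in the triangulation `(S,E)`: its two adjacent
triangles are faces `a b c` and `a b d`, and the open segments `ab` and `cd` cross
(equivalently, the quadrilateral `a c b d` is convex). -/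
def Flippable (S : Finset Pt) (E : Finset (Sym2 Pt)) (e : Sym2 Pt) : Prop :=
  ∃ a b c d : Pt, e = s(a, b) ∧ c ∈ S ∧ d ∈ S ∧
    IsFace S E a b c ∧ IsFace S E a b d ∧
    (openSegment ℝ a b ∩ openSegment ℝ c d).Nonempty

/-- The abstract graph of the geometric graph with edge set `E`, induced on the
vertex set `V`. -/
def absGraph (E : Finset (Sym2 Pt)) (V : Set Pt) : SimpleGraph V where
  Adj u v := s((u : Pt), (v : Pt)) ∈ E ∧ u ≠ v
  symm := by
    constructor
    intro u v h
    exact ⟨by rw [Sym2.eq_swap]; exact h.1, h.2.symm⟩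
  loopless := by
    constructor
    intro u h
    exact h.2 rfl

/-- The geometric graph `(S,E)` is `k`-connected as an abstract graph: it has more
than `k` vertices, and removing any set of fewer than `k` vertices leaves a
connected graph. -/
def KConnected (k : ℕ) (S : Finset Pt) (E : Finset (Sym2 Pt)) : Prop :=
  k < S.card ∧ ∀ C : Finset Pt, C ⊆ S → C.card < k →
    (absGraph E ((S : Set Pt) \ (C : Set Pt))).Connected


section BiplaneAux

lemma segOf_mk (a b : Pt) : segOf s(a, b) = openSegment ℝ a b := by
  simp [segOf]

lemma not_collinear_of_det {p q r : Pt}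
    (h : (q.1 - p.1) * (r.2 - p.2) - (q.2 - p.2) * (r.1 - p.1) ≠ 0) :
    ¬ Collinear ℝ ({p, q, r} : Set Pt) := by
  intro hc
  rw [collinear_iff_of_mem (Set.mem_insert p _)] at hc
  obtain ⟨v, hv⟩ := hc
  obtain ⟨a, ha⟩ := hv q (by simp)
  obtain ⟨b, hb⟩ := hv r (by simp)
  apply h
  have ha1 : q.1 = a * v.1 + p.1 := by rw [ha]; rfl
  have ha2 : q.2 = a * v.2 + p.2 := by rw [ha]; rfl
  have hb1 : r.1 = b * v.1 + p.1 := by rw [hb]; rfl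
  have hb2 : r.2 = b * v.2 + p.2 := by rw [hb]; rfl
  rw [ha1, ha2, hb1, hb2]; ring

/-- chords of the parabola with interleaved endpoints cross -/
lemma parabola_cross {a c b d : ℝ} (h1 : a < c) (h2 : c < b) (h3 : b < d) :
    ∃ z : Pt, z ∈ openSegment ℝ ((a, a^2) : Pt) ((b, b^2) : Pt) ∧
      z ∈ openSegment ℝ ((c, c^2) : Pt) ((d, d^2) : Pt) := by
  have hs : (0:ℝ) < c + d - a - b := by linarith
  have hs0 : c + d - a - b ≠ 0 := ne_of_gt hs
  set x : ℝ := (c * d - a * b) / (c + d - a - b) with hx_def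
  have hx : x * (c + d - a - b) = c * d - a * b := by
    rw [hx_def]; field_simp
  have hcx : c < x := by nlinarith [hx, hs, mul_pos (show (0:ℝ) < c - a by linarith) (show (0:ℝ) < b - c by linarith)]
  have hxb : x < b := by nlinarith [hx, hs, mul_pos (show (0:ℝ) < b - c by linarith) (show (0:ℝ) < d - b by linarith)]
  have hxd : x < d := by nlinarith [hx, hs, mul_pos (show (0:ℝ) < d - a by linarith) (show (0:ℝ) < d - b by linarith)]
  have hax : a < x := lt_trans h1 hcx
  have hba : b - a ≠ 0 := by intro h; linarith [sub_eq_zero.1 h]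
  have hdc : d - c ≠ 0 := by intro h; linarith [sub_eq_zero.1 h]
  refine ⟨(x, (a + b) * x - a * b), ?_, ?_⟩
  · refine ⟨(b - x) / (b - a), (x - a) / (b - a), div_pos (by linarith) (by linarith),
      div_pos (by linarith) (by linarith), ?_, ?_⟩
    · rw [← add_div, show b - x + (x - a) = b - a by ring, div_self hba]
    · refine Prod.ext_iff.2 ⟨?_, ?_⟩ <;>
        simp only [Prod.fst_add, Prod.snd_add, Prod.smul_fst, Prod.smul_snd,
          smul_eq_mul] <;> field_simp <;> ring
  · refine ⟨(d - x) / (d - c), (x - c) / (d - c), div_pos (by linarith) (by linarith),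
      div_pos (by linarith) (by linarith), ?_, ?_⟩
    · rw [← add_div, show d - x + (x - c) = d - c by ring, div_self hdc]
    · have hy : (c + d) * x - c * d = (a + b) * x - a * b := by nlinarith [hx]
      refine Prod.ext_iff.2 ⟨?_, ?_⟩ <;>
        simp only [Prod.fst_add, Prod.snd_add, Prod.smul_fst, Prod.smul_snd,
          smul_eq_mul]
      · field_simp; ring
      · rw [← hy]; field_simp; ring

/-- Non-interleaving families of "diagonals" `(i,j)` (with `i+2 ≤ j`) inside `[lo,hi]`
which avoid the full diagonal `(lo,hi)` have at most `hi - lo - 2` members. -/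
lemma laminar_bound : ∀ N lo hi (D : Finset (ℕ × ℕ)), hi ≤ lo + N →
    (∀ p ∈ D, lo ≤ p.1 ∧ p.1 + 2 ≤ p.2 ∧ p.2 ≤ hi) →
    (∀ p ∈ D, ∀ q ∈ D, ¬(p.1 < q.1 ∧ q.1 < p.2 ∧ p.2 < q.2)) →
    ((lo, hi) ∉ D → (D.card + 2 ≤ hi - lo ∨ D.card = 0)) ∧
    (D.card + 1 ≤ hi - lo ∨ D.card = 0) := by
  intro N
  induction N with
  | zero =>
    intro lo hi D hN hb _
    have hD : D = ∅ := by
      rw [Finset.eq_empty_iff_forall_notMem]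
      intro p hp
      have := hb p hp
      omega
    subst hD; simp
  | succ N ih =>
    intro lo hi D hN hb hni
    -- Q part, proven for all families at this interval
    have hQ : ∀ D' : Finset (ℕ × ℕ),
        (∀ p ∈ D', lo ≤ p.1 ∧ p.1 + 2 ≤ p.2 ∧ p.2 ≤ hi) →
        (∀ p ∈ D', ∀ q ∈ D', ¬(p.1 < q.1 ∧ q.1 < p.2 ∧ p.2 < q.2)) →
        (lo, hi) ∉ D' → (D'.card + 2 ≤ hi - lo ∨ D'.card = 0) := by
      intro D hb hni hnotin
      rcases D.eq_empty_or_nonempty with rfl | hne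
      · right; simp
      · left
        obtain ⟨e, heD, hemax⟩ := D.exists_max_image (fun p => p.2 - p.1) hne
        have heb := hb e heD
        have hene : ¬(e.1 = lo ∧ e.2 = hi) := by
          intro ⟨h1, h2⟩
          apply hnotin
          have : e = (lo, hi) := by
            rw [Prod.ext_iff]; exact ⟨h1, h2⟩
          rwa [← this]
        set z1 := D.filter (fun f => f.2 ≤ e.1) with hz1
        set z3 := D.filter (fun f => e.2 ≤ f.1) with hz3
        set z2 := D.filter (fun f => e.1 ≤ f.1 ∧ f.2 ≤ e.2 ∧ f ≠ e) with hz2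
        have hcover : D.erase e ⊆ z1 ∪ z2 ∪ z3 := by
          intro f hf
          have hfe : f ≠ e := Finset.ne_of_mem_erase hf
          have hfD : f ∈ D := Finset.mem_of_mem_erase hf
          have hfb := hb f hfD
          have h1 := hni f hfD e heD
          have h2 := hni e heD f hfD
          have hsp := hemax f hfD
          have hfe' : ¬(f.1 = e.1 ∧ f.2 = e.2) := by
            intro ⟨u1, u2⟩; exact hfe (by rw [Prod.ext_iff]; exact ⟨u1, u2⟩)
          simp only [Finset.mem_union, hz1, hz2, hz3, Finset.mem_filter]
          have : f.2 ≤ e.1 ∨ (e.1 ≤ f.1 ∧ f.2 ≤ e.2) ∨ e.2 ≤ f.1 := by omega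
          rcases this with h | h | h
          · exact Or.inl (Or.inl ⟨hfD, h⟩)
          · exact Or.inl (Or.inr ⟨hfD, h.1, h.2, hfe⟩)
          · exact Or.inr ⟨hfD, h⟩
        -- bounds for the three zones from induction
        have hb1 : ∀ p ∈ z1, lo ≤ p.1 ∧ p.1 + 2 ≤ p.2 ∧ p.2 ≤ e.1 := by
          intro p hp
          rw [hz1, Finset.mem_filter] at hp
          have := hb p hp.1; omega
        have hb2 : ∀ p ∈ z2, e.1 ≤ p.1 ∧ p.1 + 2 ≤ p.2 ∧ p.2 ≤ e.2 := by
          intro p hp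
          rw [hz2, Finset.mem_filter] at hp
          have := hb p hp.1; omega
        have hb3 : ∀ p ∈ z3, e.2 ≤ p.1 ∧ p.1 + 2 ≤ p.2 ∧ p.2 ≤ hi := by
          intro p hp
          rw [hz3, Finset.mem_filter] at hp
          have := hb p hp.1; omega
        have hni1 : ∀ p ∈ z1, ∀ q ∈ z1, ¬(p.1 < q.1 ∧ q.1 < p.2 ∧ p.2 < q.2) := by
          intro p hp q hq
          rw [hz1, Finset.mem_filter] at hp hq
          exact hni p hp.1 q hq.1
        have hni2 : ∀ p ∈ z2, ∀ q ∈ z2, ¬(p.1 < q.1 ∧ q.1 < p.2 ∧ p.2 < q.2) := by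
          intro p hp q hq
          rw [hz2, Finset.mem_filter] at hp hq
          exact hni p hp.1 q hq.1
        have hni3 : ∀ p ∈ z3, ∀ q ∈ z3, ¬(p.1 < q.1 ∧ q.1 < p.2 ∧ p.2 < q.2) := by
          intro p hp q hq
          rw [hz3, Finset.mem_filter] at hp hq
          exact hni p hp.1 q hq.1
        have hP1 := (ih lo e.1 z1 (by omega) hb1 hni1).2
        have hP3 := (ih e.2 hi z3 (by omega) hb3 hni3).2
        have hnotin2 : (e.1, e.2) ∉ z2 := by
          rw [hz2, Finset.mem_filter]
          rintro ⟨-, -, -, h⟩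
          exact h rfl
        have hQ2 := (ih e.1 e.2 z2 (by omega) hb2 hni2).1 hnotin2
        have hcard : D.card = (D.erase e).card + 1 := by
          rw [Finset.card_erase_of_mem heD]
          have : 1 ≤ D.card := Finset.card_pos.2 hne
          omega
        have hle : (D.erase e).card ≤ z1.card + z2.card + z3.card := by
          calc (D.erase e).card ≤ (z1 ∪ z2 ∪ z3).card := Finset.card_le_card hcover
            _ ≤ (z1 ∪ z2).card + z3.card := Finset.card_union_le _ _
            _ ≤ z1.card + z2.card + z3.card := by
                have := Finset.card_union_le z1 z2; omega
        rcases hP1 with h1 | h1 <;> rcases hQ2 with h2 | h2 <;> rcases hP3 with h3 | h3 <;>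
          omega
    constructor
    · exact hQ D hb hni
    · by_cases hmem : (lo, hi) ∈ D
      · have hcard : D.card = (D.erase (lo, hi)).card + 1 :=
          by rw [Finset.card_erase_of_mem hmem]; have : 1 ≤ D.card := Finset.card_pos.2 ⟨_, hmem⟩; omega
        have hb' : ∀ p ∈ D.erase (lo, hi), lo ≤ p.1 ∧ p.1 + 2 ≤ p.2 ∧ p.2 ≤ hi :=
          fun p hp => hb p (Finset.mem_of_mem_erase hp)
        have hni' : ∀ p ∈ D.erase (lo, hi), ∀ q ∈ D.erase (lo, hi),
            ¬(p.1 < q.1 ∧ q.1 < p.2 ∧ p.2 < q.2) :=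
          fun p hp q hq => hni p (Finset.mem_of_mem_erase hp) q (Finset.mem_of_mem_erase hq)
        have := hQ (D.erase (lo, hi)) hb' hni' (Finset.notMem_erase _ _)
        have hlo : lo + 2 ≤ hi := by have := hb _ hmem; omega
        omega
      · have := hQ D hb hni hmem; omega

/-- the parabola points -/
def Pp (i : ℕ) : Pt := ((i : ℝ), (i : ℝ)^2)

/-- the apex point -/
def Apx (n : ℕ) : Pt := (0, -(n : ℝ)^2)

/-- the point set -/
noncomputable def Sn (n : ℕ) : Finset Pt := insert (Apx n) ((Finset.Icc 1 (n-1)).image Pp)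

lemma Pp_inj {i j : ℕ} (h : Pp i = Pp j) : i = j := by
  have := congrArg Prod.fst h
  simpa [Pp] using Nat.cast_injective this

lemma Apx_ne_Pp {n i : ℕ} (hi : 1 ≤ i) : Apx n ≠ Pp i := by
  intro h
  have := congrArg Prod.fst h
  simp only [Apx, Pp] at this
  have : (0:ℝ) < (i:ℝ) := by exact_mod_cast hi
  simp_all

lemma mem_Sn {n : ℕ} {x : Pt} :
    x ∈ Sn n ↔ x = Apx n ∨ ∃ i, 1 ≤ i ∧ i ≤ n - 1 ∧ x = Pp i := by
  simp only [Sn, Finset.mem_insert, Finset.mem_image, Finset.mem_Icc]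
  constructor
  · rintro (h | ⟨i, ⟨h1, h2⟩, h3⟩)
    · exact Or.inl h
    · exact Or.inr ⟨i, h1, h2, h3.symm⟩
  · rintro (h | ⟨i, h1, h2, h3⟩)
    · exact Or.inl h
    · exact Or.inr ⟨i, ⟨h1, h2⟩, h3.symm⟩

lemma Pp_mem_Sn {n i : ℕ} (h1 : 1 ≤ i) (h2 : i ≤ n - 1) : Pp i ∈ Sn n :=
  mem_Sn.2 (Or.inr ⟨i, h1, h2, rfl⟩)

lemma Apx_mem_Sn {n : ℕ} : Apx n ∈ Sn n := mem_Sn.2 (Or.inl rfl)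

lemma card_Sn {n : ℕ} (hn : 1 ≤ n) : (Sn n).card = n := by
  rw [Sn, Finset.card_insert_of_notMem, Finset.card_image_of_injective _ (fun a b h => Pp_inj h)]
  · simp [Nat.card_Icc]; omega
  · intro h
    obtain ⟨i, hi, h⟩ := Finset.mem_image.1 h
    exact Apx_ne_Pp (Finset.mem_Icc.1 hi).1 h.symm

lemma genpos_Sn {n : ℕ} : GenPos (Sn n) := by
  intro p hp q hq r hr hpq hpr hqr
  -- helper facts
  have key : ∀ i j : ℕ, 1 ≤ i → i ≤ n - 1 → 1 ≤ j → j ≤ n - 1 → i ≠ j →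
      ((i:ℝ) - (j:ℝ)) ≠ 0 ∧ ((i:ℝ) * (j:ℝ) - (n:ℝ)^2) ≠ 0 := by
    intro i j hi1 hi2 hj1 hj2 hij
    constructor
    · have : (i:ℝ) ≠ (j:ℝ) := by exact_mod_cast hij
      exact sub_ne_zero.2 this
    · have hin : i ≤ n - 1 := hi2
      have hjn : j ≤ n - 1 := hj2
      have h1 : (i:ℝ) ≤ (n:ℝ) - 1 := by
        have hn1 : 1 ≤ n := le_trans hi1 (le_trans hi2 (Nat.sub_le n 1))
        have := (Nat.cast_le (α := ℝ)).2 hi2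
        rwa [Nat.cast_sub hn1, Nat.cast_one] at this
      have h2 : (j:ℝ) ≤ (n:ℝ) - 1 := by
        have hn1 : 1 ≤ n := le_trans hj1 (le_trans hj2 (Nat.sub_le n 1))
        have := (Nat.cast_le (α := ℝ)).2 hj2
        rwa [Nat.cast_sub hn1, Nat.cast_one] at this
      have h3 : (1:ℝ) ≤ (i:ℝ) := by exact_mod_cast hi1
      have h4 : (1:ℝ) ≤ (j:ℝ) := by exact_mod_cast hj1
      have : (i:ℝ) * (j:ℝ) < (n:ℝ)^2 := by nlinarith
      exact sub_ne_zero.2 (ne_of_lt this)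
  rcases mem_Sn.1 hp with rfl | ⟨i, hi1, hi2, rfl⟩ <;>
    rcases mem_Sn.1 hq with rfl | ⟨j, hj1, hj2, rfl⟩ <;>
      rcases mem_Sn.1 hr with rfl | ⟨k, hk1, hk2, rfl⟩
  · exact absurd rfl hpq
  · exact absurd rfl hpq
  · exact absurd rfl hpr
  · -- A, Pj, Pk
    have hjk : j ≠ k := fun h => hqr (by rw [h])
    obtain ⟨hd, hm⟩ := key j k hj1 hj2 hk1 hk2 hjk
    apply not_collinear_of_det
    simp only [Apx, Pp]
    have : ((j:ℝ) - 0) * ((k:ℝ)^2 - -(n:ℝ)^2) - ((j:ℝ)^2 - -(n:ℝ)^2) * ((k:ℝ) - 0)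
        = -(((j:ℝ) - (k:ℝ)) * ((j:ℝ) * (k:ℝ) - (n:ℝ)^2)) := by ring
    rw [this]
    exact neg_ne_zero.2 (mul_ne_zero hd hm)
  · exact absurd rfl hqr
  · -- Pi, A, Pk
    have hik : i ≠ k := fun h => hpr (by rw [h])
    obtain ⟨hd, hm⟩ := key i k hi1 hi2 hk1 hk2 hik
    apply not_collinear_of_det
    simp only [Apx, Pp]
    have : (0 - (i:ℝ)) * ((k:ℝ)^2 - (i:ℝ)^2) - (-(n:ℝ)^2 - (i:ℝ)^2) * ((k:ℝ) - (i:ℝ))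
        = ((i:ℝ) - (k:ℝ)) * ((i:ℝ) * (k:ℝ) - (n:ℝ)^2) := by ring
    rw [this]
    exact mul_ne_zero hd hm
  · -- Pi, Pj, A
    have hij : i ≠ j := fun h => hpq (by rw [h])
    obtain ⟨hd, hm⟩ := key i j hi1 hi2 hj1 hj2 hij
    apply not_collinear_of_det
    simp only [Apx, Pp]
    have : ((j:ℝ) - (i:ℝ)) * (-(n:ℝ)^2 - (i:ℝ)^2) - ((j:ℝ)^2 - (i:ℝ)^2) * (0 - (i:ℝ))
        = -(((i:ℝ) - (j:ℝ)) * ((i:ℝ) * (j:ℝ) - (n:ℝ)^2)) := by ring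
    rw [this]
    exact neg_ne_zero.2 (mul_ne_zero hd hm)
  · -- Pi, Pj, Pk
    have hij : i ≠ j := fun h => hpq (by rw [h])
    have hik : i ≠ k := fun h => hpr (by rw [h])
    have hjk : j ≠ k := fun h => hqr (by rw [h])
    apply not_collinear_of_det
    simp only [Pp]
    have : ((j:ℝ) - (i:ℝ)) * ((k:ℝ)^2 - (i:ℝ)^2) - ((j:ℝ)^2 - (i:ℝ)^2) * ((k:ℝ) - (i:ℝ))
        = ((j:ℝ) - (i:ℝ)) * ((k:ℝ) - (i:ℝ)) * ((k:ℝ) - (j:ℝ)) := by ring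
    rw [this]
    have c1 : (j:ℝ) - (i:ℝ) ≠ 0 := sub_ne_zero.2 (by exact_mod_cast hij.symm)
    have c2 : (k:ℝ) - (i:ℝ) ≠ 0 := sub_ne_zero.2 (by exact_mod_cast hik.symm)
    have c3 : (k:ℝ) - (j:ℝ) ≠ 0 := sub_ne_zero.2 (by exact_mod_cast hjk.symm)
    exact mul_ne_zero (mul_ne_zero c1 c2) c3

-- cast helper
lemma cast_le_sub {i n : ℕ} (hn : 1 ≤ n) (h : i ≤ n - 1) : (i : ℝ) ≤ (n : ℝ) - 1 := by
  have := (Nat.cast_le (α := ℝ)).2 h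
  rwa [Nat.cast_sub hn, Nat.cast_one] at this

section hull
variable {n : ℕ} (hn : 3 < n)

include hn
lemma hullv_Apx : HullVertex (Sn n) (Apx n) := by
  refine ⟨Apx_mem_Sn, fun hmem => ?_⟩
  have hlin : IsLinearMap ℝ (fun w : Pt => w.2) :=
    ⟨fun x y => rfl, fun c x => rfl⟩
  have hsub : (Sn n : Set Pt) \ {Apx n} ⊆ {w : Pt | 1 ≤ w.2} := by
    rintro x ⟨hx, hne⟩
    rcases mem_Sn.1 hx with rfl | ⟨i, hi1, _, rfl⟩
    · exact absurd rfl hne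
    · have : (1:ℝ) ≤ (i:ℝ) := by exact_mod_cast hi1
      simp only [Pp, Set.mem_setOf_eq]
      nlinarith
  have := convexHull_min hsub (convex_halfSpace_ge hlin 1) hmem
  simp only [Apx, Set.mem_setOf_eq] at this
  nlinarith [this, (show (4:ℝ) ≤ (n:ℝ) by exact_mod_cast hn)]

lemma hullv_B : HullVertex (Sn n) (Pp 1) := by
  have hn1 : (4:ℝ) ≤ (n:ℝ) := by exact_mod_cast hn
  refine ⟨Pp_mem_Sn le_rfl (by omega), fun hmem => ?_⟩
  have hlin : IsLinearMap ℝ (fun w : Pt => (n:ℝ)^2 * w.1 - w.2) := by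
    constructor
    · intro x y; simp [Prod.fst_add, Prod.snd_add]; ring
    · intro c x; simp [Prod.smul_fst, Prod.smul_snd, smul_eq_mul]; ring
  have hsub : (Sn n : Set Pt) \ {Pp 1} ⊆ {w : Pt | (n:ℝ)^2 ≤ (n:ℝ)^2 * w.1 - w.2} := by
    rintro x ⟨hx, hne⟩
    rcases mem_Sn.1 hx with rfl | ⟨i, hi1, hi2, rfl⟩
    · simp only [Apx, Set.mem_setOf_eq]; nlinarith
    · have hi1' : i ≠ 1 := fun h => hne (by rw [h]; rfl)
      have h2 : (2:ℝ) ≤ (i:ℝ) := by exact_mod_cast (by omega : 2 ≤ i)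
      have h3 : (i:ℝ) ≤ (n:ℝ) - 1 := cast_le_sub (by omega) hi2
      simp only [Pp, Set.mem_setOf_eq]
      nlinarith
  have := convexHull_min hsub (convex_halfSpace_ge hlin _) hmem
  simp only [Pp, Set.mem_setOf_eq, Nat.cast_one] at this
  nlinarith [this]

lemma hullv_C : HullVertex (Sn n) (Pp (n-1)) := by
  have hn1 : (4:ℝ) ≤ (n:ℝ) := by exact_mod_cast hn
  have hcast : ((n - 1 : ℕ) : ℝ) = (n:ℝ) - 1 := by
    rw [Nat.cast_sub (by omega), Nat.cast_one]
  refine ⟨Pp_mem_Sn (by omega) le_rfl, fun hmem => ?_⟩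
  have hlin : IsLinearMap ℝ (fun w : Pt => -((n:ℝ)^2 * w.1) - w.2) := by
    constructor
    · intro x y; simp [Prod.fst_add, Prod.snd_add]; ring
    · intro c x; simp [Prod.smul_fst, Prod.smul_snd, smul_eq_mul]; ring
  set c : ℝ := -((n:ℝ)^2 * ((n:ℝ)-1)) - ((n:ℝ)-1)^2 + 1 with hc
  have hsub : (Sn n : Set Pt) \ {Pp (n-1)} ⊆ {w : Pt | c ≤ -((n:ℝ)^2 * w.1) - w.2} := by
    rintro x ⟨hx, hne⟩
    rcases mem_Sn.1 hx with rfl | ⟨i, hi1, hi2, rfl⟩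
    · simp only [Apx, Set.mem_setOf_eq]; nlinarith
    · have hi1' : i ≠ n - 1 := fun h => hne (by rw [h]; rfl)
      have h2 : (1:ℝ) ≤ (i:ℝ) := by exact_mod_cast hi1
      have h3 : (i:ℝ) ≤ (n:ℝ) - 2 := by
        have : i ≤ n - 2 := by omega
        have := (Nat.cast_le (α := ℝ)).2 this
        rwa [Nat.cast_sub (by omega), Nat.cast_ofNat] at this
      simp only [Pp, Set.mem_setOf_eq]
      have k1 : (n:ℝ)^2 * (((n:ℝ)-1) - (i:ℝ)) ≥ (n:ℝ)^2 := by nlinarith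
      have k2 : (i:ℝ)^2 ≤ ((n:ℝ)-1)^2 := by nlinarith
      nlinarith
  have := convexHull_min hsub (convex_halfSpace_ge hlin _) hmem
  simp only [Pp, Set.mem_setOf_eq, hcast] at this
  nlinarith [this]

lemma not_hullv_mid {i : ℕ} (hi1 : 2 ≤ i) (hi2 : i ≤ n - 2) :
    Pp i ∈ convexHull ℝ ((Sn n : Set Pt) \ {Pp i}) := by
  have hn1 : (4:ℝ) ≤ (n:ℝ) := by exact_mod_cast hn
  have h2 : (2:ℝ) ≤ (i:ℝ) := by exact_mod_cast hi1
  have h3 : (i:ℝ) ≤ (n:ℝ) - 2 := by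
    have := (Nat.cast_le (α := ℝ)).2 hi2
    rwa [Nat.cast_sub (by omega), Nat.cast_ofNat] at this
  set ii : ℝ := (i:ℝ)
  set D : ℝ := (n:ℝ)^2 - ii^2 + 1 with hD
  have hDpos : 0 < D := by rw [hD]; nlinarith
  set l : ℝ := 1 / D with hl
  set mu : ℝ := (D - 1 - ii) / (2 * D) with hmu
  set nu : ℝ := (D - 1 + ii) / (2 * D) with hnu
  have hlpos : 0 < l := by positivity
  have hkey : 0 < D - 1 - ii := by rw [hD]; nlinarith
  have hmupos : 0 < mu := by rw [hmu]; positivity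
  have hnupos : 0 < nu := by
    rw [hnu]
    have : 0 < D - 1 + ii := by nlinarith
    positivity
  -- the three reference points
  have hA : Apx n ∈ (Sn n : Set Pt) \ {Pp i} := by
    refine ⟨Apx_mem_Sn, ?_⟩
    simp only [Set.mem_singleton_iff]
    exact Apx_ne_Pp (by omega)
  have hu : Pp (i-1) ∈ (Sn n : Set Pt) \ {Pp i} := by
    refine ⟨Pp_mem_Sn (by omega) (by omega), ?_⟩
    simp only [Set.mem_singleton_iff]
    intro h; have := Pp_inj h; omega
  have hv : Pp (i+1) ∈ (Sn n : Set Pt) \ {Pp i} := by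
    refine ⟨Pp_mem_Sn (by omega) (by omega), ?_⟩
    simp only [Set.mem_singleton_iff]
    intro h; have := Pp_inj h; omega
  set s : Set Pt := (Sn n : Set Pt) \ {Pp i} with hs
  have hconv : Convex ℝ (convexHull ℝ s) := convex_convexHull ℝ s
  have hA' : Apx n ∈ convexHull ℝ s := subset_convexHull ℝ s hA
  have hu' : Pp (i-1) ∈ convexHull ℝ s := subset_convexHull ℝ s hu
  have hv' : Pp (i+1) ∈ convexHull ℝ s := subset_convexHull ℝ s hv
  have hmn : 0 < mu + nu := by linarith
  have hw : (mu/(mu+nu)) • Pp (i-1) + (nu/(mu+nu)) • Pp (i+1) ∈ convexHull ℝ s :=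
    hconv hu' hv' (by positivity) (by positivity)
      (by rw [← add_div, div_self (ne_of_gt hmn)])
  have hD0 : D ≠ 0 := ne_of_gt hDpos
  have hsum : l + (mu + nu) = 1 := by
    rw [hmu, hnu, hl]; field_simp; ring
  have hfin := hconv hA' hw (le_of_lt hlpos) (le_of_lt hmn) hsum
  have heq : l • Apx n + (mu + nu) • ((mu/(mu+nu)) • Pp (i-1) + (nu/(mu+nu)) • Pp (i+1))
      = Pp i := by
    rw [smul_add, smul_smul, smul_smul,
      mul_div_cancel₀ _ (ne_of_gt hmn), mul_div_cancel₀ _ (ne_of_gt hmn)]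
    have hc1 : ((i - 1 : ℕ) : ℝ) = ii - 1 := by
      rw [Nat.cast_sub (by omega), Nat.cast_one]
    have hc2 : ((i + 1 : ℕ) : ℝ) = ii + 1 := by push_cast; ring
    refine Prod.ext_iff.2 ⟨?_, ?_⟩ <;>
      simp only [Apx, Pp, Prod.fst_add, Prod.snd_add, Prod.smul_fst, Prod.smul_snd,
        smul_eq_mul, hc1, hc2, hmu, hnu, hl]
    · field_simp; ring
    · rw [hD]
      rw [hD] at hD0
      field_simp
      ring
  rwa [heq] at hfin

end hull

lemma hullCard_Sn {n : ℕ} (hn : 3 < n) : hullCard (Sn n) = 3 := by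
  have hset : {p : Pt | HullVertex (Sn n) p} = {Apx n, Pp 1, Pp (n-1)} := by
    ext x
    simp only [Set.mem_setOf_eq, Set.mem_insert_iff, Set.mem_singleton_iff]
    constructor
    · rintro ⟨hxS, hxnot⟩
      rcases mem_Sn.1 hxS with rfl | ⟨i, hi1, hi2, rfl⟩
      · exact Or.inl rfl
      · rcases eq_or_ne i 1 with rfl | h1
        · exact Or.inr (Or.inl rfl)
        · rcases eq_or_ne i (n-1) with rfl | h2
          · exact Or.inr (Or.inr rfl)
          · exact absurd (not_hullv_mid hn (by omega) (by omega)) hxnot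
    · rintro (rfl | rfl | rfl)
      · exact hullv_Apx hn
      · exact hullv_B hn
      · exact hullv_C hn
  rw [hullCard, hset]
  rw [Set.ncard_eq_three]
  exact ⟨Apx n, Pp 1, Pp (n-1), Apx_ne_Pp (by omega), Apx_ne_Pp (by omega),
    fun h => by have := Pp_inj h; omega, rfl⟩

/-- The main bound: every biplane graph on `Sn n` has at most `4n - 10` edges. -/
lemma biplane_bound {n : ℕ} (hn : 3 < n) (E : Finset (Sym2 Pt))
    (hE : IsEdgeSet (Sn n) E) (hB : BiplaneEdges E) : E.card ≤ 4 * n - 10 := by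
  classical
  obtain ⟨E₁, E₂, hE12, -, hP1, hP2⟩ := hB
  set Idx : Finset (ℕ × ℕ) :=
    ((Finset.Icc 1 (n-1)) ×ˢ (Finset.Icc 1 (n-1))).filter
      (fun p => p.1 + 2 ≤ p.2 ∧ ¬(p.1 = 1 ∧ p.2 = n-1)) with hIdx
  set Fdia : Finset (Sym2 Pt) := Idx.image (fun p => s(Pp p.1, Pp p.2)) with hFdia
  set NonF : Finset (Sym2 Pt) :=
    ((Sn n).erase (Apx n)).image (fun x => s(Apx n, x)) ∪
      ((Finset.Icc 1 (n-2)).image (fun i => s(Pp i, Pp (i+1))) ∪ {s(Pp 1, Pp (n-1))})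
    with hNonF
  have hIdxmem : ∀ p : ℕ × ℕ, p ∈ Idx ↔
      (1 ≤ p.1 ∧ p.1 ≤ n-1) ∧ (1 ≤ p.2 ∧ p.2 ≤ n-1) ∧ p.1 + 2 ≤ p.2 ∧
        ¬(p.1 = 1 ∧ p.2 = n-1) := by
    intro p
    rw [hIdx, Finset.mem_filter, Finset.mem_product, Finset.mem_Icc, Finset.mem_Icc]
    tauto
  -- non-diagonal edges are few
  have hNonFcard : NonF.card ≤ 2 * n - 2 := by
    have c1 : (((Sn n).erase (Apx n)).image (fun x => s(Apx n, x))).card ≤ n - 1 := by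
      calc _ ≤ ((Sn n).erase (Apx n)).card := Finset.card_image_le
        _ = n - 1 := by rw [Finset.card_erase_of_mem Apx_mem_Sn, card_Sn (by omega)]
    have c2 : ((Finset.Icc 1 (n-2)).image (fun i => s(Pp i, Pp (i+1)))).card ≤ n - 2 := by
      calc _ ≤ (Finset.Icc 1 (n-2)).card := Finset.card_image_le
        _ = n - 2 := by rw [Nat.card_Icc]; omega
    calc NonF.card ≤ (((Sn n).erase (Apx n)).image (fun x => s(Apx n, x))).card
          + (((Finset.Icc 1 (n-2)).image (fun i => s(Pp i, Pp (i+1)))).card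
            + ({s(Pp 1, Pp (n-1))} : Finset (Sym2 Pt)).card) := by
          refine le_trans (Finset.card_union_le _ _) ?_
          gcongr
          exact Finset.card_union_le _ _
      _ ≤ (n-1) + ((n-2) + 1) := by
          have : ({s(Pp 1, Pp (n-1))} : Finset (Sym2 Pt)).card = 1 := Finset.card_singleton _
          omega
      _ ≤ 2 * n - 2 := by omega
  -- edges outside Fdia lie in NonF
  have hEsub : E \ Fdia ⊆ NonF := by
    have hcase : ∀ i j : ℕ, 1 ≤ i → i ≤ n-1 → 1 ≤ j → j ≤ n-1 → i < j →
        s(Pp i, Pp j) ∉ Fdia → s(Pp i, Pp j) ∈ NonF := by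
      intro i j hi1 hi2 hj1 hj2 hij hnot
      rcases eq_or_ne j (i+1) with rfl | hne1
      · rw [hNonF]
        refine Finset.mem_union_right _ (Finset.mem_union_left _ ?_)
        exact Finset.mem_image.2 ⟨i, Finset.mem_Icc.2 ⟨hi1, by omega⟩, rfl⟩
      · by_cases hne2 : i = 1 ∧ j = n-1
        · rw [hNonF, hne2.1, hne2.2]
          exact Finset.mem_union_right _ (Finset.mem_union_right _ (Finset.mem_singleton_self _))
        · exfalso
          apply hnot
          rw [hFdia]
          exact Finset.mem_image.2 ⟨(i, j), (hIdxmem (i,j)).2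
            ⟨⟨hi1, hi2⟩, ⟨hj1, hj2⟩, by omega, hne2⟩, rfl⟩
    intro e he
    rw [Finset.mem_sdiff] at he
    obtain ⟨heE, heF⟩ := he
    obtain ⟨hnd, hmem⟩ := hE e heE
    revert heE heF hnd hmem
    induction e using Sym2.ind with
    | _ u v =>
      intro heE heF hnd hmem
      have huv : u ≠ v := fun h => hnd (by rw [h]; exact Sym2.mk_isDiag_iff.2 rfl)
      have hu : u ∈ Sn n := hmem u (Sym2.mem_mk_left u v)
      have hv : v ∈ Sn n := hmem v (Sym2.mem_mk_right u v)
      rcases mem_Sn.1 hu with rfl | ⟨i, hi1, hi2, rfl⟩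
      · -- u = Apx
        rw [hNonF]
        refine Finset.mem_union_left _ (Finset.mem_image.2 ⟨v, ?_, rfl⟩)
        exact Finset.mem_erase.2 ⟨fun h => huv h.symm, hv⟩
      · rcases mem_Sn.1 hv with rfl | ⟨j, hj1, hj2, rfl⟩
        · -- v = Apx
          rw [Sym2.eq_swap] at heF ⊢
          rw [hNonF]
          refine Finset.mem_union_left _ (Finset.mem_image.2 ⟨Pp i, ?_, rfl⟩)
          exact Finset.mem_erase.2 ⟨fun h => huv h, Pp_mem_Sn hi1 hi2⟩
        · have hij : i ≠ j := fun h => huv (by rw [h])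
          rcases lt_or_gt_of_ne hij with h | h
          · exact hcase i j hi1 hi2 hj1 hj2 h heF
          · rw [Sym2.eq_swap] at heF ⊢
            exact hcase j i hj1 hj2 hi1 hi2 h heF
  -- each plane layer has at most n-4 diagonals
  have hlayer : ∀ Et : Finset (Sym2 Pt), PlaneEdges Et → (Et ∩ Fdia).card ≤ n - 4 := by
    intro Et hPt
    set D : Finset (ℕ × ℕ) := Idx.filter (fun p => s(Pp p.1, Pp p.2) ∈ Et) with hD
    have hsub : Et ∩ Fdia ⊆ D.image (fun p => s(Pp p.1, Pp p.2)) := by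
      intro e he
      rw [Finset.mem_inter] at he
      obtain ⟨p, hp, hpe⟩ := Finset.mem_image.1 (hFdia ▸ he.2)
      exact Finset.mem_image.2 ⟨p, Finset.mem_filter.2 ⟨hp, by rw [hpe]; exact he.1⟩, hpe⟩
    have hcard1 : (Et ∩ Fdia).card ≤ D.card :=
      le_trans (Finset.card_le_card hsub) Finset.card_image_le
    have hbounds : ∀ p ∈ D, 1 ≤ p.1 ∧ p.1 + 2 ≤ p.2 ∧ p.2 ≤ n-1 := by
      intro p hp
      have := (hIdxmem p).1 (Finset.mem_filter.1 hp).1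
      omega
    have hni : ∀ p ∈ D, ∀ q ∈ D, ¬(p.1 < q.1 ∧ q.1 < p.2 ∧ p.2 < q.2) := by
      rintro p hp q hq ⟨h1, h2, h3⟩
      rw [hD, Finset.mem_filter] at hp hq
      have hep : s(Pp p.1, Pp p.2) ∈ Et := hp.2
      have heq : s(Pp q.1, Pp q.2) ∈ Et := hq.2
      have hne : s(Pp p.1, Pp p.2) ≠ s(Pp q.1, Pp q.2) := by
        intro hh
        rw [Sym2.eq_iff] at hh
        rcases hh with ⟨e1, -⟩ | ⟨-, e2⟩
        · have := Pp_inj e1; omega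
        · have := Pp_inj e2; omega
      obtain ⟨z, hz1, hz2⟩ := parabola_cross
        (show ((p.1:ℝ)) < (q.1:ℝ) by exact_mod_cast h1)
        (show ((q.1:ℝ)) < (p.2:ℝ) by exact_mod_cast h2)
        (show ((p.2:ℝ)) < (q.2:ℝ) by exact_mod_cast h3)
      have hdisj := hPt _ hep _ heq hne
      rw [segOf_mk, segOf_mk] at hdisj
      exact Set.eq_empty_iff_forall_notMem.1 hdisj z ⟨hz1, hz2⟩
    have hnotin : (1, n-1) ∉ D := by
      rw [hD, Finset.mem_filter]
      rintro ⟨hmem, -⟩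
      have := (hIdxmem (1, n-1)).1 hmem
      simp at this
    have := (laminar_bound n 1 (n-1) D (by omega) hbounds hni).1 hnotin
    omega
  -- put everything together
  have hsplit : E.card = (E \ Fdia).card + (E ∩ Fdia).card :=
    (Finset.card_sdiff_add_card_inter E Fdia).symm
  have hinter : (E ∩ Fdia).card ≤ (E₁ ∩ Fdia).card + (E₂ ∩ Fdia).card := by
    have : E ∩ Fdia = (E₁ ∩ Fdia) ∪ (E₂ ∩ Fdia) := by
      rw [hE12, Finset.union_inter_distrib_right]
    rw [this]
    exact Finset.card_union_le _ _
  have b1 := hlayer E₁ hP1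
  have b2 := hlayer E₂ hP2
  have bNF := Finset.card_le_card hEsub
  omega

end BiplaneAux

/-- Tightness for `h = 3`: for every `n > 3` there is a point set in general
position with exactly `3` hull vertices on which every biplane graph has at most
`4n − 10` edges. -/
theorem maximum_biplane_tight_h3 :
    ∀ n : ℕ, 3 < n →
      ∃ S : Finset Pt, S.card = n ∧ GenPos S ∧ hullCard S = 3 ∧
        ∀ E : Finset (Sym2 Pt), IsEdgeSet S E → BiplaneEdges E →
          (E.card : ℤ) ≤ 4 * (n : ℤ) - 10 := by
  intro n hn
  refine ⟨Sn n, card_Sn (by omega), genpos_Sn, hullCard_Sn hn, ?_⟩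
  intro E hE hB
  have := biplane_bound hn E hE hB
  omega
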